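/- arXiv:1611.00245 — 6 statements merged into one kernel-verified Lean document; each statement's English description precedes it below -/
import Mathlib

section
/- Let ℓ be a prime number with ℓ > 3 and let n be a natural number with 1 ≤ n < ℓ. Then the tuple (m₁, m₂, m₃, a₁, a₂, a₃) = (n, (2n) mod ℓ, n, 1, (ℓ−1)/2, 1) is a level-ℓ junior ghost datum on the theta graph; moreover a₁ + a₂ + a₃ = (ℓ+3)/2, so its age is (ℓ+3)/(2ℓ) < 1. -/
/-! All three monodromies are units mod the prime `ℓ`, so the compatibility condition is empty
and `⊙` is ordinary multiplication. The image condition then asks `a₁ m₁ ≡ a₃ m₃` and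
`a₁ m₁ + a₂ m₂ ≡ 0`; with `m₁ = m₃ = n`, `m₂ = 2n` and `a₁ = a₃ = 1` the second reads
`a₂ ≡ -1/2 (mod ℓ)`, whose least positive representative is `(ℓ - 1)/2`. The age is then
`(ℓ + 3)/(2ℓ)`, which is `< 1` exactly when `ℓ > 3`. -/

/-- The operation `a ⊙ m := a * m / gcd(m, ℓ)` (exact division since `gcd(m, ℓ) ∣ m`). -/
def odot (ℓ a m : ℕ) : ℕ := a * m / Nat.gcd m ℓ

/-- A level-`ℓ` junior ghost datum on the theta graph (two vertices joined by three
edges, edges 1 and 3 oriented from the first vertex to the second, edge 2 opposite). -/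
def IsJuniorGhostDatum (ℓ m₁ m₂ m₃ a₁ a₂ a₃ : ℕ) : Prop :=
  m₁ < ℓ ∧ m₂ < ℓ ∧ m₃ < ℓ ∧
  1 ≤ a₁ ∧ a₁ < ℓ ∧ 1 ≤ a₂ ∧ a₂ < ℓ ∧ 1 ≤ a₃ ∧ a₃ < ℓ ∧
  m₂ ≡ m₁ + m₃ [MOD ℓ] ∧
  Nat.gcd m₁ ℓ ∣ a₁ ∧ Nat.gcd m₂ ℓ ∣ a₂ ∧ Nat.gcd m₃ ℓ ∣ a₃ ∧
  odot ℓ a₁ m₁ ≡ odot ℓ a₃ m₃ [MOD ℓ] ∧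
  odot ℓ a₁ m₁ + odot ℓ a₂ m₂ ≡ 0 [MOD ℓ] ∧
  a₁ + a₂ + a₃ < ℓ

theorem odot_of_coprime {ℓ a m : ℕ} (h : m.Coprime ℓ) : odot ℓ a m = a * m := by
  rw [odot, h.gcd_eq_one, Nat.div_one]

theorem isJuniorGhostDatum_of_coprime {ℓ m₁ m₂ m₃ a₁ a₂ a₃ : ℕ}
    (hm₁ : m₁ < ℓ) (hm₂ : m₂ < ℓ) (hm₃ : m₃ < ℓ) (ha₁ : 1 ≤ a₁) (ha₂ : 1 ≤ a₂) (ha₃ : 1 ≤ a₃)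
    (hc₁ : m₁.Coprime ℓ) (hc₂ : m₂.Coprime ℓ) (hc₃ : m₃.Coprime ℓ)
    (hker : m₂ ≡ m₁ + m₃ [MOD ℓ])
    (him₁₃ : a₁ * m₁ ≡ a₃ * m₃ [MOD ℓ]) (him₁₂ : a₁ * m₁ + a₂ * m₂ ≡ 0 [MOD ℓ])
    (hage : a₁ + a₂ + a₃ < ℓ) :
    IsJuniorGhostDatum ℓ m₁ m₂ m₃ a₁ a₂ a₃ := by
  rw [IsJuniorGhostDatum, odot_of_coprime hc₁, odot_of_coprime hc₂, odot_of_coprime hc₃,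
    hc₁.gcd_eq_one, hc₂.gcd_eq_one, hc₃.gcd_eq_one]
  exact ⟨hm₁, hm₂, hm₃, ha₁, by omega, ha₂, by omega, ha₃, by omega, hker,
    one_dvd _, one_dvd _, one_dvd _, him₁₃, him₁₂, hage⟩

theorem add_half_pred_mul_two_mul_modEq_zero {ℓ : ℕ} (hℓ : Odd ℓ) (n : ℕ) :
    n + (ℓ - 1) / 2 * (2 * n) ≡ 0 [MOD ℓ] := by
  obtain ⟨k, rfl⟩ := hℓ
  have hk : (2 * k + 1 - 1) / 2 = k := by omega
  rw [hk, show n + k * (2 * n) = (2 * k + 1) * n by ring]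
  exact Nat.modEq_zero_iff_dvd.mpr (dvd_mul_right _ _)

theorem prime_gt_three_junior_ghost_datum (ℓ n : ℕ) (hp : ℓ.Prime) (hℓ : 3 < ℓ)
    (hn1 : 1 ≤ n) (hn : n < ℓ) :
    IsJuniorGhostDatum ℓ n ((2 * n) % ℓ) n 1 ((ℓ - 1) / 2) 1 ∧
    1 + (ℓ - 1) / 2 + 1 = (ℓ + 3) / 2 ∧
    ((ℓ : ℚ) + 3) / (2 * ℓ) < 1 := by
  have hodd : Odd ℓ := hp.odd_of_ne_two (by omega)
  have hcn : n.Coprime ℓ := (Nat.coprime_of_lt_prime (by omega) hn hp).symm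
  have hc2n : ((2 * n) % ℓ).Coprime ℓ :=
    (ZMod.coprime_mod_iff_coprime _ _).mpr
      (Nat.Coprime.mul_left (Nat.coprime_of_lt_prime two_ne_zero (by omega) hp).symm hcn)
  have him : n + (ℓ - 1) / 2 * ((2 * n) % ℓ) ≡ 0 [MOD ℓ] :=
    ((Nat.mod_modEq _ _).mul_left _ |>.add_left n).trans
      (add_half_pred_mul_two_mul_modEq_zero hodd n)
  have hdatum : IsJuniorGhostDatum ℓ n ((2 * n) % ℓ) n 1 ((ℓ - 1) / 2) 1 := by
    refine isJuniorGhostDatum_of_coprime hn (Nat.mod_lt _ (by omega)) hn le_rfl (by omega) le_rfl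
      hcn hc2n hcn ((Nat.mod_modEq _ _).trans (by rw [two_mul])) rfl ?_ (by omega)
    simpa only [one_mul] using him
  refine ⟨hdatum, by omega, ?_⟩
  have hℓ4 : (4 : ℚ) ≤ ℓ := by exact_mod_cast hℓ
  rw [div_lt_one (by positivity)]
  linarith
end

section
/- Let ℓ ≥ 2 and k ≥ 1 be natural numbers. If (m₁, m₂, m₃, a₁, a₂, a₃) is a level-ℓ junior ghost datum on the theta graph, then (k·m₁, k·m₂, k·m₃, k·a₁, k·a₂, k·a₃) is a level-(k·ℓ) junior ghost datum on the theta graph. -/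
/- Scaling by `k` multiplies every gcd `gcd(m, ℓ)` by `k`, so each condition of a ghost datum
is the old one multiplied through by `k`: strict inequalities and divisibilities survive
multiplication by `k ≥ 1`, and congruences mod `ℓ` become congruences mod `k * ℓ`. -/

theorem odot_mul_mul (ℓ k a m : ℕ) : odot (k * ℓ) (k * a) (k * m) = k * odot ℓ a m := by
  rcases Nat.eq_zero_or_pos k with rfl | hk
  · simp [odot]
  · have hdvd : Nat.gcd m ℓ ∣ a * m := (Nat.gcd_dvd_left m ℓ).mul_left a
    calc k * a * (k * m) / Nat.gcd (k * m) (k * ℓ)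
        = k * (k * (a * m)) / (k * Nat.gcd m ℓ) := by rw [Nat.gcd_mul_left]; ring_nf
      _ = k * (a * m / Nat.gcd m ℓ) := by rw [Nat.mul_div_mul_left _ _ hk, Nat.mul_div_assoc k hdvd]

theorem gcd_mul_mul_dvd_mul {m ℓ a : ℕ} (k : ℕ) (h : Nat.gcd m ℓ ∣ a) :
    Nat.gcd (k * m) (k * ℓ) ∣ k * a := by
  rw [Nat.gcd_mul_left]
  exact Nat.mul_dvd_mul_left k h

theorem junior_ghost_datum_scale_general (ℓ k m₁ m₂ m₃ a₁ a₂ a₃ : ℕ) (hk : 1 ≤ k)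
    (h : IsJuniorGhostDatum ℓ m₁ m₂ m₃ a₁ a₂ a₃) :
    IsJuniorGhostDatum (k * ℓ) (k * m₁) (k * m₂) (k * m₃) (k * a₁) (k * a₂) (k * a₃) := by
  obtain ⟨hm₁, hm₂, hm₃, ha₁, ha₁ℓ, ha₂, ha₂ℓ, ha₃, ha₃ℓ, hker, hg₁, hg₂, hg₃, himg₁, himg₂, hage⟩ :=
    h
  have scale_lt {x y : ℕ} (hxy : x < y) : k * x < k * y := Nat.mul_lt_mul_of_pos_left hxy hk
  have scale_pos {x : ℕ} (hx : 1 ≤ x) : 1 ≤ k * x := Nat.one_le_iff_ne_zero.mpr (by positivity)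
  refine ⟨scale_lt hm₁, scale_lt hm₂, scale_lt hm₃, scale_pos ha₁, scale_lt ha₁ℓ,
    scale_pos ha₂, scale_lt ha₂ℓ, scale_pos ha₃, scale_lt ha₃ℓ, ?_,
    gcd_mul_mul_dvd_mul k hg₁, gcd_mul_mul_dvd_mul k hg₂, gcd_mul_mul_dvd_mul k hg₃, ?_, ?_, ?_⟩
  · simpa only [mul_add] using hker.mul_left' k
  · simpa only [odot_mul_mul] using himg₁.mul_left' k
  · simpa only [odot_mul_mul, mul_add, mul_zero] using himg₂.mul_left' k
  · simpa only [mul_add] using scale_lt hage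

theorem junior_ghost_datum_scale (ℓ k m₁ m₂ m₃ a₁ a₂ a₃ : ℕ) (hℓ : 2 ≤ ℓ) (hk : 1 ≤ k)
    (h : IsJuniorGhostDatum ℓ m₁ m₂ m₃ a₁ a₂ a₃) :
    IsJuniorGhostDatum (k * ℓ) (k * m₁) (k * m₂) (k * m₃) (k * a₁) (k * a₂) (k * a₃) :=
  junior_ghost_datum_scale_general ℓ k m₁ m₂ m₃ a₁ a₂ a₃ hk h
end

section
/- If a natural number ℓ ≥ 2 has a prime divisor p with p > 3, then there exists a level-ℓ junior ghost datum on the theta graph. -/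
/-! Write `ℓ = (2s+1)q` with `2s+1 = p`. On the theta graph take the edge labels
`M = (q, 2q, q)` and weights `a = (q, sq, q)`: then `a ⊙ M = (q, 2sq, q)`, which is a
coboundary since `q + 2sq = ℓ`, and the age `(s+2)q/ℓ` is below `1` as soon as `p ≥ 5`. -/

theorem Nat.Coprime.gcd_mul_right_mul_right {k n q : ℕ} (h : k.Coprime n) :
    Nat.gcd (k * q) (n * q) = q := by
  rw [Nat.gcd_mul_right, h.gcd_eq_one, one_mul]

theorem odot_mul_right_of_coprime {n q k : ℕ} (a : ℕ) (hq : 0 < q) (h : k.Coprime n) :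
    odot (n * q) a (k * q) = a * k := by
  rw [odot, h.gcd_mul_right_mul_right, ← mul_assoc, Nat.mul_div_cancel _ hq]

theorem isJuniorGhostDatum_odd_mul {s q : ℕ} (hq : 0 < q) (hs : 2 ≤ s) :
    IsJuniorGhostDatum ((2 * s + 1) * q) (1 * q) (2 * q) (1 * q) q (s * q) q := by
  have hone : Nat.Coprime 1 (2 * s + 1) := Nat.coprime_one_left _
  have htwo : Nat.Coprime 2 (2 * s + 1) := Nat.coprime_two_left.mpr (odd_two_mul_add_one s)
  have hgcd₁ : Nat.gcd (1 * q) ((2 * s + 1) * q) = q :=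
    hone.gcd_mul_right_mul_right
  have hodot₁ : odot ((2 * s + 1) * q) q (1 * q) = q := by
    rw [odot_mul_right_of_coprime q hq hone, mul_one]
  have hodot₂ : odot ((2 * s + 1) * q) (s * q) (2 * q) = 2 * s * q := by
    rw [odot_mul_right_of_coprime _ hq htwo]; ring
  have hle : q + s * q + q < (2 * s + 1) * q := by nlinarith
  refine ⟨by omega, by nlinarith, by omega, hq, by omega, by nlinarith, by omega, hq, by omega,
    ?_, hgcd₁.dvd, ?_, hgcd₁.dvd, .refl _, ?_, hle⟩
  · rw [← add_mul]
  · rw [htwo.gcd_mul_right_mul_right]; exact Dvd.intro_left s rfl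
  · rw [hodot₁, hodot₂, Nat.modEq_zero_iff_dvd]; exact ⟨1, by ring⟩

theorem exists_junior_ghost_datum_of_odd_dvd {ℓ n : ℕ} (hℓ : ℓ ≠ 0) (hn : Odd n) (h5 : 5 ≤ n)
    (hnℓ : n ∣ ℓ) : ∃ m₁ m₂ m₃ a₁ a₂ a₃ : ℕ, IsJuniorGhostDatum ℓ m₁ m₂ m₃ a₁ a₂ a₃ := by
  obtain ⟨s, rfl⟩ := hn
  obtain ⟨q, rfl⟩ := hnℓ
  exact ⟨_, _, _, _, _, _,
    isJuniorGhostDatum_odd_mul (Nat.pos_of_ne_zero (right_ne_zero_of_mul hℓ)) (by omega)⟩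

theorem exists_junior_ghost_datum_of_prime_factor_gt_three (ℓ p : ℕ) (hℓ : 2 ≤ ℓ)
    (hp : p.Prime) (hpℓ : p ∣ ℓ) (hp3 : 3 < p) :
    ∃ m₁ m₂ m₃ a₁ a₂ a₃ : ℕ, IsJuniorGhostDatum ℓ m₁ m₂ m₃ a₁ a₂ a₃ := by
  have hp4 : p ≠ 4 := by rintro rfl; norm_num at hp
  exact exists_junior_ghost_datum_of_odd_dvd (by omega) (hp.odd_of_ne_two (by omega)) (by omega) hpℓ
end

section
/- If ℓ is a natural number divisible by 9, then there exists a level-ℓ junior ghost datum on the theta graph (namely the scaling of the level-9 datum (1, 2, 1, 1, 4, 1) by k = ℓ/9). -/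
/-! The level-`9` datum `(1, 2, 1, 1, 4, 1)` is checked directly, and scaling a datum by `k`
preserves all the conditions because every `gcd` and every `⊙` occurring in them scales by `k`. -/

theorem odot_mul_mul_mul (k n a m : ℕ) (hk : 0 < k) :
    odot (k * n) (k * a) (k * m) = k * odot n a m := by
  have hdvd : Nat.gcd m n ∣ a * m := (Nat.gcd_dvd_left m n).mul_left a
  rw [odot, odot, Nat.gcd_mul_left, show k * a * (k * m) = k * (k * (a * m)) by ring,
    Nat.mul_div_mul_left _ _ hk, Nat.mul_div_assoc _ hdvd]

theorem IsJuniorGhostDatum.mul {n m₁ m₂ m₃ a₁ a₂ a₃ : ℕ} (k : ℕ) (hk : 0 < k)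
    (h : IsJuniorGhostDatum n m₁ m₂ m₃ a₁ a₂ a₃) :
    IsJuniorGhostDatum (k * n) (k * m₁) (k * m₂) (k * m₃) (k * a₁) (k * a₂) (k * a₃) := by
  obtain ⟨hm₁, hm₂, hm₃, ha₁, ha₁', ha₂, ha₂', ha₃, ha₃', hker, hd₁, hd₂, hd₃, him₁, him₂,
    hage⟩ := h
  simp only [IsJuniorGhostDatum, odot_mul_mul_mul _ _ _ _ hk, Nat.gcd_mul_left]
  refine ⟨Nat.mul_lt_mul_of_pos_left hm₁ hk, Nat.mul_lt_mul_of_pos_left hm₂ hk,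
    Nat.mul_lt_mul_of_pos_left hm₃ hk, Nat.mul_pos hk ha₁, Nat.mul_lt_mul_of_pos_left ha₁' hk,
    Nat.mul_pos hk ha₂, Nat.mul_lt_mul_of_pos_left ha₂' hk, Nat.mul_pos hk ha₃,
    Nat.mul_lt_mul_of_pos_left ha₃' hk, ?_, Nat.mul_dvd_mul_left k hd₁,
    Nat.mul_dvd_mul_left k hd₂, Nat.mul_dvd_mul_left k hd₃, him₁.mul_left' k, ?_, ?_⟩
  · simpa only [mul_add] using hker.mul_left' k
  · simpa only [mul_add, mul_zero] using him₂.mul_left' k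
  · simpa only [mul_add] using Nat.mul_lt_mul_of_pos_left hage hk

theorem isJuniorGhostDatum_nine : IsJuniorGhostDatum 9 1 2 1 1 4 1 := by
  unfold IsJuniorGhostDatum odot; decide

theorem exists_junior_ghost_datum_of_nine_dvd (ℓ : ℕ) (hℓ : 0 < ℓ) (h : 9 ∣ ℓ) :
    IsJuniorGhostDatum ℓ (ℓ / 9 * 1) (ℓ / 9 * 2) (ℓ / 9 * 1) (ℓ / 9 * 1) (ℓ / 9 * 4)
      (ℓ / 9 * 1) := by
  obtain ⟨k, rfl⟩ := h
  rw [Nat.mul_div_cancel_left k (by norm_num), mul_comm 9 k]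
  exact isJuniorGhostDatum_nine.mul k (by omega)
end

section
/- For ℓ = 12 there is no level-12 junior ghost datum on the theta graph: there exist no natural numbers m₁, m₂, m₃ < 12 and a₁, a₂, a₃ with 1 ≤ aᵢ < 12 such that m₂ ≡ m₁ + m₃ (mod 12), gcd(mᵢ, 12) divides aᵢ for i = 1,2,3, a₁ ⊙ m₁ ≡ a₃ ⊙ m₃ (mod 12), a₁ ⊙ m₁ + a₂ ⊙ m₂ ≡ 0 (mod 12), and a₁ + a₂ + a₃ < 12. -/
/-!
Because `gcd(m, ℓ) ∣ a`, the residue `a ⊙ m` has the same gcd with `ℓ` as `a`. The image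
condition makes the three residues `aᵢ ⊙ mᵢ` agree up to sign, so the three weights share one gcd
`h` with `ℓ`, and at level 12 the junior condition leaves only `h = 1` or the weights `(2, 2, 2)`
and `(3, 3, 3)`. If `h = 1`, every `mᵢ` is a unit; as every unit of `ℤ/12` squares to `1`, putting
`x = a₁ m₁` gives `m₁ = a₁ x`, `m₃ = a₃ x`, `m₂ = -a₂ x`, and the kernel condition becomes
`(a₁ + a₂ + a₃) x = 0` with `x` a unit, which contradicts `0 < a₁ + a₂ + a₃ < 12`. The two
remaining weight triples are ruled out by running through the 144 pairs `(m₁, m₃)`.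
-/

theorem Nat.gcd_eq_gcd_of_add_modEq_zero {ℓ a b : ℕ} (h : a + b ≡ 0 [MOD ℓ]) :
    Nat.gcd a ℓ = Nat.gcd b ℓ := by
  have hℓ : ℓ ∣ a + b := Nat.modEq_zero_iff_dvd.mp h
  apply Nat.dvd_antisymm <;> refine Nat.dvd_gcd ?_ (Nat.gcd_dvd_right _ _)
  · exact (Nat.dvd_add_right (Nat.gcd_dvd_left a ℓ)).mp ((Nat.gcd_dvd_right a ℓ).trans hℓ)
  · exact (Nat.dvd_add_left (Nat.gcd_dvd_left b ℓ)).mp ((Nat.gcd_dvd_right b ℓ).trans hℓ)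

section Odot

variable {ℓ a m : ℕ}

theorem gcd_odot (hℓ : 0 < ℓ) (h : Nat.gcd m ℓ ∣ a) :
    Nat.gcd (odot ℓ a m) ℓ = Nat.gcd a ℓ := by
  set g := Nat.gcd m ℓ
  set d := Nat.gcd a ℓ
  have hgd : g ∣ d := Nat.dvd_gcd h (Nat.gcd_dvd_right m ℓ)
  have hu : Nat.Coprime (m / g) (ℓ / d) :=
    (Nat.coprime_div_gcd_div_gcd (Nat.gcd_pos_of_pos_right m hℓ)).coprime_dvd_right
      (Nat.div_dvd_div_left (Nat.gcd_dvd_right a ℓ) hgd)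
  have ha : Nat.Coprime (a / d) (ℓ / d) :=
    Nat.coprime_div_gcd_div_gcd (Nat.gcd_pos_of_pos_right a hℓ)
  have hodot : odot ℓ a m = d * (a / d * (m / g)) := by
    rw [odot, Nat.mul_div_assoc a (Nat.gcd_dvd_left m ℓ), ← mul_assoc,
      Nat.mul_div_cancel' (Nat.gcd_dvd_left a ℓ)]
  calc Nat.gcd (odot ℓ a m) ℓ = d * Nat.gcd (a / d * (m / g)) (ℓ / d) := by
        rw [hodot, ← Nat.gcd_mul_left, Nat.mul_div_cancel' (Nat.gcd_dvd_right a ℓ)]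
    _ = d := by rw [Nat.Coprime.gcd_eq_one (ha.mul_left hu), mul_one]

theorem Nat.Coprime.coprime_of_gcd_dvd (ha : Nat.Coprime a ℓ) (h : Nat.gcd m ℓ ∣ a) :
    Nat.Coprime m ℓ :=
  Nat.eq_one_of_dvd_one (ha ▸ Nat.dvd_gcd h (Nat.gcd_dvd_right m ℓ))

theorem odot_eq_mul_of_coprime (ha : Nat.Coprime a ℓ) (h : Nat.gcd m ℓ ∣ a) :
    odot ℓ a m = a * m := by
  rw [odot, ha.coprime_of_gcd_dvd h, Nat.div_one]

end Odot

namespace IsJuniorGhostDatum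

variable {ℓ m₁ m₂ m₃ a₁ a₂ a₃ : ℕ}

instance : Decidable (IsJuniorGhostDatum ℓ m₁ m₂ m₃ a₁ a₂ a₃) := by
  unfold IsJuniorGhostDatum; infer_instance

theorem m₂_eq (h : IsJuniorGhostDatum ℓ m₁ m₂ m₃ a₁ a₂ a₃) : m₂ = (m₁ + m₃) % ℓ := by
  obtain ⟨-, hm₂, -, -, -, -, -, -, -, hker, -⟩ := h
  rw [← hker, Nat.mod_eq_of_lt hm₂]

theorem gcd_weights_eq_gcd (h : IsJuniorGhostDatum ℓ m₁ m₂ m₃ a₁ a₂ a₃) :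
    Nat.gcd a₂ ℓ = Nat.gcd a₁ ℓ ∧ Nat.gcd a₃ ℓ = Nat.gcd a₁ ℓ := by
  obtain ⟨hm₁, -, -, -, -, -, -, -, -, -, hd₁, hd₂, hd₃, hedge, hvertex, -⟩ := h
  have hℓ : 0 < ℓ := by omega
  rw [← gcd_odot hℓ hd₁, ← gcd_odot hℓ hd₂, ← gcd_odot hℓ hd₃]
  exact ⟨(Nat.gcd_eq_gcd_of_add_modEq_zero hvertex).symm, hedge.gcd_eq.symm⟩

theorem not_coprime_of_sq_eq_one (hsq : ∀ u : (ZMod ℓ)ˣ, u ^ 2 = 1)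
    (h : IsJuniorGhostDatum ℓ m₁ m₂ m₃ a₁ a₂ a₃) : ¬ Nat.Coprime a₁ ℓ := by
  intro hc₁
  obtain ⟨hg₂, hg₃⟩ := h.gcd_weights_eq_gcd
  have hc₂ : Nat.Coprime a₂ ℓ := hg₂.trans hc₁
  have hc₃ : Nat.Coprime a₃ ℓ := hg₃.trans hc₁
  obtain ⟨-, -, -, ha₁, -, -, -, -, -, hker, hd₁, hd₂, hd₃, hedge, hvertex, hsum⟩ := h
  have hsq_cast : ∀ a, Nat.Coprime a ℓ → (a : ZMod ℓ) ^ 2 = 1 := fun a ha => by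
    rw [← ZMod.coe_unitOfCoprime a ha, ← Units.val_pow_eq_pow_val, hsq, Units.val_one]
  rw [odot_eq_mul_of_coprime hc₁ hd₁, odot_eq_mul_of_coprime hc₃ hd₃,
    ← ZMod.natCast_eq_natCast_iff] at hedge
  rw [odot_eq_mul_of_coprime hc₁ hd₁, odot_eq_mul_of_coprime hc₂ hd₂,
    ← ZMod.natCast_eq_natCast_iff] at hvertex
  rw [← ZMod.natCast_eq_natCast_iff] at hker
  push_cast at hedge hvertex hker
  have hunit : IsUnit ((a₁ : ZMod ℓ) * m₁) :=
    ((ZMod.isUnit_iff_coprime a₁ ℓ).mpr hc₁).mul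
      ((ZMod.isUnit_iff_coprime m₁ ℓ).mpr (hc₁.coprime_of_gcd_dvd hd₁))
  have hzero : ((a₁ + a₂ + a₃ : ℕ) : ZMod ℓ) = 0 := by
    rw [← hunit.mul_left_eq_zero]
    push_cast
    linear_combination (m₁ : ZMod ℓ) * hsq_cast a₁ hc₁ - (m₂ : ZMod ℓ) * hsq_cast a₂ hc₂
      + (m₃ : ZMod ℓ) * hsq_cast a₃ hc₃ + (a₂ : ZMod ℓ) * hvertex + (a₃ : ZMod ℓ) * hedge - hker
  rw [ZMod.natCast_eq_zero_iff] at hzero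
  exact absurd (Nat.le_of_dvd (by omega) hzero) (by omega)

theorem coprime_or_weights_eq_of_twelve (h : IsJuniorGhostDatum 12 m₁ m₂ m₃ a₁ a₂ a₃) :
    Nat.Coprime a₁ 12 ∨ (a₁ = 2 ∧ a₂ = 2 ∧ a₃ = 2) ∨ (a₁ = 3 ∧ a₂ = 3 ∧ a₃ = 3) := by
  have hcheck : ∀ a₁ ∈ Finset.Icc 1 11, ∀ a₂ ∈ Finset.Icc 1 11, ∀ a₃ ∈ Finset.Icc 1 11,
      a₁ + a₂ + a₃ < 12 → Nat.gcd a₂ 12 = Nat.gcd a₁ 12 → Nat.gcd a₃ 12 = Nat.gcd a₁ 12 →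
      Nat.Coprime a₁ 12 ∨ (a₁ = 2 ∧ a₂ = 2 ∧ a₃ = 2) ∨ (a₁ = 3 ∧ a₂ = 3 ∧ a₃ = 3) := by
    decide
  obtain ⟨hg₂, hg₃⟩ := h.gcd_weights_eq_gcd
  obtain ⟨-, -, -, ha₁, ha₁', ha₂, ha₂', ha₃, ha₃', -, -, -, -, -, -, hsum⟩ := h
  exact hcheck a₁ (Finset.mem_Icc.mpr ⟨ha₁, by omega⟩) a₂ (Finset.mem_Icc.mpr ⟨ha₂, by omega⟩)
    a₃ (Finset.mem_Icc.mpr ⟨ha₃, by omega⟩) hsum hg₂ hg₃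

theorem not_twelve_of_weights_eq_two_or_three {c : ℕ} (hc : c = 2 ∨ c = 3) :
    ¬ IsJuniorGhostDatum 12 m₁ m₂ m₃ c c c := by
  intro h
  have hcheck : ∀ m₁ < (12 : ℕ), ∀ m₃ < (12 : ℕ),
      ¬ IsJuniorGhostDatum 12 m₁ ((m₁ + m₃) % 12) m₃ c c c := by
    rcases hc with rfl | rfl <;> decide
  obtain rfl := h.m₂_eq
  exact hcheck m₁ h.1 m₃ h.2.2.1 h

end IsJuniorGhostDatum

theorem ZMod.units_sq_eq_one_twelve : ∀ u : (ZMod 12)ˣ, u ^ 2 = 1 := by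
  decide

theorem no_junior_ghost_datum_level_twelve :
    ¬ ∃ m₁ m₂ m₃ a₁ a₂ a₃ : ℕ, IsJuniorGhostDatum 12 m₁ m₂ m₃ a₁ a₂ a₃ := by
  rintro ⟨m₁, m₂, m₃, a₁, a₂, a₃, h⟩
  rcases h.coprime_or_weights_eq_of_twelve with hc | ⟨rfl, rfl, rfl⟩ | ⟨rfl, rfl, rfl⟩
  · exact h.not_coprime_of_sq_eq_one ZMod.units_sq_eq_one_twelve hc
  · exact IsJuniorGhostDatum.not_twelve_of_weights_eq_two_or_three (Or.inl rfl) h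
  · exact IsJuniorGhostDatum.not_twelve_of_weights_eq_two_or_three (Or.inr rfl) h
end

section
/- For ℓ = 12, the tuple (m₁, m₂, m₃, m₄, a₁, a₂, a₃, a₄) = (1, 5, 2, 2, 2, 2, 2, 2) is a level-12 junior ghost datum on the two-vertex graph with four edges. (Hence the locus of noncanonical singularities of the moduli space of level-12 curves has a component of codimension 4.) -/
/-- A level-`ℓ` junior ghost datum on the two-vertex graph with four edges
(edges 1, 3, 4 oriented from the first vertex to the second, edge 2 opposite). -/
def IsJuniorGhostDatum4 (ℓ m₁ m₂ m₃ m₄ a₁ a₂ a₃ a₄ : ℕ) : Prop :=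
  m₁ < ℓ ∧ m₂ < ℓ ∧ m₃ < ℓ ∧ m₄ < ℓ ∧
  1 ≤ a₁ ∧ a₁ < ℓ ∧ 1 ≤ a₂ ∧ a₂ < ℓ ∧ 1 ≤ a₃ ∧ a₃ < ℓ ∧ 1 ≤ a₄ ∧ a₄ < ℓ ∧
  m₂ ≡ m₁ + m₃ + m₄ [MOD ℓ] ∧
  Nat.gcd m₁ ℓ ∣ a₁ ∧ Nat.gcd m₂ ℓ ∣ a₂ ∧ Nat.gcd m₃ ℓ ∣ a₃ ∧ Nat.gcd m₄ ℓ ∣ a₄ ∧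
  odot ℓ a₁ m₁ ≡ odot ℓ a₃ m₃ [MOD ℓ] ∧
  odot ℓ a₁ m₁ ≡ odot ℓ a₄ m₄ [MOD ℓ] ∧
  odot ℓ a₁ m₁ + odot ℓ a₂ m₂ ≡ 0 [MOD ℓ] ∧
  a₁ + a₂ + a₃ + a₄ < ℓ

theorem junior_ghost_datum_four_edges_level_twelve :
    IsJuniorGhostDatum4 12 1 5 2 2 2 2 2 2 := by
  have odot_edge₁ : odot 12 2 1 = 2 := rfl
  have odot_edge₂ : odot 12 2 5 = 10 := rfl
  have odot_edge₃₄ : odot 12 2 2 = 2 := rfl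
  unfold IsJuniorGhostDatum4
  rw [odot_edge₁, odot_edge₂, odot_edge₃₄]
  decide
end
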